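/- arXiv:2411.19595 — 7 statements merged into one kernel-verified Lean document; each statement's English description precedes it below -/
import Mathlib

section
/- Let 𝒞 be an abelian category and let n ≥ 2 be an integer. Let A* be a cochain complex in 𝒞 with A^i = 0 for all i ≤ 0 and all i ≥ n, and assume A* is K-projective in the sense that every chain map from A* to an acyclic cochain complex is chain homotopic to zero. Let B* be a cochain complex that is bounded above (B^i = 0 for i sufficiently large) with B^i projective for every i, and let f : A* → B* be a quasi-isomorphism. Then both the image of the differential B^0 → B^1 and the image of the differential B^{n-1} → B^n are projective objects of 𝒞. -/
open CategoryTheory CategoryTheory.Limits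

section Aux

variable {C : Type*} [Category C] [Abelian C]

/-- A retract of a projective object is projective. -/
lemma aux_projective_of_retract {P Q : C} (hQ : Projective Q) (s : P ⟶ Q) (r : Q ⟶ P)
    (hsr : s ≫ r = 𝟙 P) : Projective P where
  factors {E X} g e he := by
    obtain ⟨l, hl⟩ := hQ.factors (r ≫ g) e
    exact ⟨s ≫ l, by rw [Category.assoc, hl, ← Category.assoc, hsr, Category.id_comp]⟩

/-- Lifting a cocycle valued in an acyclic complex through the previous differential,
when the source is projective. -/
lemma aux_lift_step {P : C} (hP : Projective P) (D : CochainComplex C ℤ)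
    (hD : ∀ i : ℤ, D.ExactAt i) (i : ℤ) (v : P ⟶ D.X i) (hv : v ≫ D.d i (i + 1) = 0) :
    ∃ w : P ⟶ D.X (i - 1), w ≫ D.d (i - 1) i = v := by
  haveI := hP
  have hex : (D.sc' (i - 1) i (i + 1)).Exact := by
    rw [← D.exactAt_iff' (i - 1) i (i + 1) (by simp) (by simp)]
    exact hD i
  exact ⟨hex.liftFromProjective v hv, hex.liftFromProjective_comp v hv⟩

/-- Construction of a partial null-homotopy for a chain map from a bounded above complex of
projectives to an acyclic complex, by descending induction. -/
lemma aux_partial_homotopy (B D : CochainComplex C ℤ) (hD : ∀ i : ℤ, D.ExactAt i)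
    (hBproj : ∀ i : ℤ, Projective (B.X i)) (m : ℤ) (hBm : ∀ i : ℤ, m < i → IsZero (B.X i))
    (u : B ⟶ D) (N : ℕ) :
    ∃ k : ∀ (i j : ℤ), (B.X i) ⟶ (D.X j),
      ∀ i : ℤ, m + 1 - N ≤ i →
        u.f i = k i (i - 1) ≫ D.d (i - 1) i + B.d i (i + 1) ≫ k (i + 1) i := by
  induction N with
  | zero =>
    refine ⟨fun _ _ => 0, fun i hi => ?_⟩
    exact (hBm i (by simpa using hi)).eq_of_src _ _
  | succ N ih =>
    obtain ⟨k, hk⟩ := ih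
    set i₀ : ℤ := m - N with hi₀def
    have hk1 := hk (i₀ + 1) (by omega)
    rw [show i₀ + 1 - 1 = i₀ by omega] at hk1
    -- the cocycle to lift
    have hv : (u.f i₀ - B.d i₀ (i₀ + 1) ≫ k (i₀ + 1) i₀) ≫ D.d i₀ (i₀ + 1) = 0 := by
      have hcomm := u.comm i₀ (i₀ + 1)
      have hdd : B.d i₀ (i₀ + 1) ≫ B.d (i₀ + 1) (i₀ + 1 + 1) = 0 := B.d_comp_d _ _ _
      have h1 : k (i₀ + 1) i₀ ≫ D.d i₀ (i₀ + 1)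
          = u.f (i₀ + 1) - B.d (i₀ + 1) (i₀ + 1 + 1) ≫ k (i₀ + 1 + 1) (i₀ + 1) := by
        rw [hk1]; abel
      rw [Preadditive.sub_comp, Category.assoc, h1, hcomm]
      simp only [Preadditive.comp_sub, ← Category.assoc, hdd]
      simp
    obtain ⟨w, hw⟩ := aux_lift_step (hBproj i₀) D hD i₀ _ hv
    refine ⟨fun i j =>
      if h : i = i₀ ∧ j = i₀ - 1 then
        eqToHom (by rw [h.1]) ≫ w ≫ eqToHom (by rw [h.2]) else k i j, fun i hi => ?_⟩
    by_cases hii : i = i₀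
    · subst hii
      dsimp only
      rw [dif_pos ⟨rfl, rfl⟩, dif_neg (by omega : ¬(i₀ + 1 = i₀ ∧ i₀ = i₀ - 1))]
      simp only [eqToHom_refl, Category.comp_id, Category.id_comp]
      rw [hw]
      abel
    · have hi' : i₀ + 1 ≤ i := by
        have : m + 1 - (N + 1 : ℕ) ≤ i := hi
        push_cast at this
        omega
      dsimp only
      rw [dif_neg (by omega : ¬(i = i₀ ∧ i - 1 = i₀ - 1)),
        dif_neg (by omega : ¬(i + 1 = i₀ ∧ i = i₀ - 1))]
      exact hk i (by omega)

/-- If the identity of `B.X i` decomposes as `κ ≫ d + d ≫ κ'`, then the images of the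
differentials out of and into position `i` are projective (retract argument). -/
lemma aux_projective_images (B : CochainComplex C ℤ)
    (hBproj : ∀ i : ℤ, Projective (B.X i)) (i : ℤ)
    (κ : B.X i ⟶ B.X (i - 1)) (κ' : B.X (i + 1) ⟶ B.X i)
    (hκ : 𝟙 (B.X i) = κ ≫ B.d (i - 1) i + B.d i (i + 1) ≫ κ') :
    Projective (image (B.d i (i + 1))) ∧ Projective (image (B.d (i - 1) i)) := by
  constructor
  · -- image of B.d i (i+1) is a retract of B.X i
    set q := factorThruImage (B.d i (i + 1)) with hq
    set ι := image.ι (B.d i (i + 1)) with hι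
    have hfac : q ≫ ι = B.d i (i + 1) := image.fac _
    have hdq : B.d (i - 1) i ≫ q = 0 := by
      rw [← cancel_mono ι, Category.assoc, hfac, B.d_comp_d, zero_comp]
    have hsec : (ι ≫ κ') ≫ q = 𝟙 _ := by
      rw [← cancel_epi q]
      have : q ≫ (ι ≫ κ') ≫ q = ((q ≫ ι) ≫ κ') ≫ q := by simp only [Category.assoc]
      rw [this, hfac]
      have hx : B.d i (i + 1) ≫ κ' = 𝟙 (B.X i) - κ ≫ B.d (i - 1) i := by
        rw [hκ]; abel
      rw [hx, Preadditive.sub_comp, Category.id_comp, Category.assoc, hdq, comp_zero,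
        sub_zero, Category.comp_id]
    exact aux_projective_of_retract (hBproj i) (ι ≫ κ') q hsec
  · -- image of B.d (i-1) i is a retract of B.X (i-1)
    set q := factorThruImage (B.d (i - 1) i) with hq
    set ι := image.ι (B.d (i - 1) i) with hι
    have hfac : q ≫ ι = B.d (i - 1) i := image.fac _
    have hιd : ι ≫ B.d i (i + 1) = 0 := by
      rw [← cancel_epi q, ← Category.assoc, hfac, B.d_comp_d, comp_zero]
    have hsec : (ι ≫ κ) ≫ q = 𝟙 _ := by
      rw [← cancel_mono ι]
      have : ((ι ≫ κ) ≫ q) ≫ ι = ι ≫ (κ ≫ B.d (i - 1) i) := by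
        simp only [Category.assoc, hfac]
      rw [this]
      have : κ ≫ B.d (i - 1) i = 𝟙 (B.X i) - B.d i (i + 1) ≫ κ' := by
        rw [hκ]; abel
      rw [this, Preadditive.comp_sub, Category.comp_id, ← Category.assoc, hιd, zero_comp,
        sub_zero, Category.id_comp]
    exact aux_projective_of_retract (hBproj (i - 1)) (ι ≫ κ) q hsec

/-- The mapping cone of a quasi-isomorphism is acyclic. -/
lemma aux_cone_exactAt {A B : CochainComplex C ℤ} (f : A ⟶ B) (hf : QuasiIso f) (i : ℤ) :
    (CochainComplex.mappingCone f).ExactAt i := by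
  haveI := hf
  have h1 : (HomotopyCategory.subcategoryAcyclic C).trW
      ((HomotopyCategory.quotient C (ComplexShape.up ℤ)).map f) := by
    rw [← HomotopyCategory.quasiIso_eq_trW_subcategoryAcyclic]
    rw [HomotopyCategory.quotient_map_mem_quasiIso_iff]
    exact hf
  have h2 := (ObjectProperty.trW_iff_of_distinguished
      (HomotopyCategory.subcategoryAcyclic C) _
      (HomotopyCategory.mappingCone_triangleh_distinguished f)).1 h1
  exact (HomotopyCategory.quotient_obj_mem_subcategoryAcyclic_iff_exactAt _).1 h2 i

end Aux

/-- Let `A` be a cochain complex concentrated in degrees `0 < i < n`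
(for some `n ≥ 2`) which is K-projective (any chain map to an acyclic complex is
null-homotopic), let `B` be a bounded-above complex of projectives and let `f : A ⟶ B`
be a quasi-isomorphism.  Then the images of the differentials `B^0 → B^1` and
`B^{n-1} → B^n` are projective. -/
theorem images_projective_of_Kprojective_qis {C : Type*} [Category C] [Abelian C]
    (n : ℤ) (hn : 2 ≤ n)
    (A B : CochainComplex C ℤ)
    (hAzero : ∀ i : ℤ, i ≤ 0 ∨ n ≤ i → IsZero (A.X i))
    (hKproj : ∀ (D : CochainComplex C ℤ), (∀ i : ℤ, IsZero (D.homology i)) →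
      ∀ (g : A ⟶ D), Nonempty (Homotopy g 0))
    (hBbdd : ∃ m : ℤ, ∀ i : ℤ, m < i → IsZero (B.X i))
    (hBproj : ∀ i : ℤ, Projective (B.X i))
    (f : A ⟶ B) (hf : QuasiIso f) :
    Projective (image (B.d 0 1)) ∧ Projective (image (B.d (n - 1) n)) := by
  classical
  obtain ⟨m, hm⟩ := hBbdd
  set Df := CochainComplex.mappingCone f with hDf
  have hDfex : ∀ i : ℤ, Df.ExactAt i := aux_cone_exactAt f hf
  set N : ℕ := (m + 1).toNat with hN
  have hmN : m + 1 - (N : ℤ) ≤ 0 := by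
    rw [hN]
    omega
  obtain ⟨k, hk⟩ := aux_partial_homotopy B Df hDfex hBproj m hm
    (CochainComplex.mappingCone.inr f) N
  -- the key identity at a degree where A vanishes
  have key : ∀ i : ℤ, IsZero (A.X i) → m + 1 - (N : ℤ) ≤ i →
      𝟙 (B.X i) = (k i (i - 1) ≫ (CochainComplex.mappingCone.snd f).v (i - 1) (i - 1)
            (add_zero _)) ≫ B.d (i - 1) i
        + B.d i (i + 1) ≫ (k (i + 1) i ≫
            (CochainComplex.mappingCone.snd f).v i i (add_zero i)) := by
    intro i hA hi
    have h := congrArg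
      (fun t => t ≫ (CochainComplex.mappingCone.snd f).v i i (add_zero i)) (hk i hi)
    rw [Preadditive.add_comp, Category.assoc, Category.assoc,
      CochainComplex.mappingCone.inr_f_snd_v,
      CochainComplex.mappingCone.d_snd_v f (i - 1) i (by omega)] at h
    have hfz : f.f i = 0 := hA.eq_of_src _ _
    rw [hfz] at h
    simp only [comp_zero, zero_add, Preadditive.comp_add] at h
    rw [h]
    simp only [Category.assoc]
  constructor
  · have h0 := key 0 (hAzero 0 (Or.inl le_rfl)) (by omega)
    have := (aux_projective_images B hBproj 0 _ _ h0).1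
    simpa using this
  · have hnn := key n (hAzero n (Or.inr le_rfl)) (by omega)
    exact (aux_projective_images B hBproj n _ _ hnn).2
end

section
/- Let Y be a Hausdorff paracompact topological space of finite covering dimension, meaning there exists N ∈ ℕ such that every open cover of Y admits an open refinement in which each point of Y lies in at most N members. Let P be a property of open subsets of Y such that: (i) if P holds for an open set V and U ⊆ V is open, then P holds for U; (ii) every point of Y has an open neighbourhood satisfying P; (iii) for every family of pairwise disjoint open sets each satisfying P, their union satisfies P. Then Y admits a finite open cover all of whose members satisfy P. -/
/-! Refine the cover by `P`-sets to an open cover of order at most `N` and take a partition of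
unity `(f i)` subordinate to it. For a finite set `S` of indices, the Wells set `W S` is where the
`f i` with `i ∈ S` are positive and strictly larger than all the others. Wells sets of sets of
the same cardinality are disjoint, since on their intersection some `f i` would be both larger and
smaller than some `f j`. Every point lies in `W S` for `S` its set of positive indices, and
`1 ≤ |S| ≤ N`; so the `N` unions `⋃_{|S| = k} W S` form a finite open cover by `P`-sets. -/

open Set

/-- A topological space has covering dimension at most `N` if every open cover admits an
open refinement in which every point lies in at most `N` members. -/
def HasCoveringDimLE (Y : Type*) [TopologicalSpace Y] (N : ℕ) : Prop :=
  ∀ 𝒰 : Set (Set Y), (∀ U ∈ 𝒰, IsOpen U) → ⋃₀ 𝒰 = univ →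
    ∃ 𝒱 : Set (Set Y), (∀ V ∈ 𝒱, IsOpen V) ∧ ⋃₀ 𝒱 = univ ∧
      (∀ V ∈ 𝒱, ∃ U ∈ 𝒰, V ⊆ U) ∧
      ∀ y : Y, {V ∈ 𝒱 | y ∈ V}.Finite ∧ {V ∈ 𝒱 | y ∈ V}.ncard ≤ N

open Topology

namespace PartitionOfUnity

variable {ι X : Type*} [TopologicalSpace X] {s : Set X} (f : PartitionOfUnity ι X s)

def wellsSet (S : Finset ι) : Set X :=
  {x | ∀ i ∈ S, 0 < f i x ∧ ∀ j ∉ S, f j x < f i x}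

theorem wellsSet_subset_support {S : Finset ι} {i : ι} (hi : i ∈ S) :
    f.wellsSet S ⊆ Function.support (f i) :=
  fun _ hx => (hx i hi).1.ne'

theorem isOpen_wellsSet (S : Finset ι) : IsOpen (f.wellsSet S) := by
  refine isOpen_iff_mem_nhds.2 fun x hx => ?_
  have hpos : ∀ᶠ y in 𝓝 x, ∀ i ∈ S, 0 < f i y :=
    S.eventually_all.2 fun i hi =>
      continuousAt_const.eventually_lt (f i).continuous.continuousAt (hx i hi).1
  -- near `x` only the finitely many indices of `f.fintsupport x` can be positive
  have hlt : ∀ᶠ y in 𝓝 x, ∀ i ∈ S, ∀ j ∈ f.fintsupport x, j ∉ S → f j y < f i y :=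
    S.eventually_all.2 fun i hi => (f.fintsupport x).eventually_all.2 fun j _ =>
      Filter.eventually_imp_distrib_left.2 fun hj =>
        (f j).continuous.continuousAt.eventually_lt (f i).continuous.continuousAt
          ((hx i hi).2 j hj)
  filter_upwards [hpos, hlt, f.eventually_finsupport_subset x] with y hpos hlt hsub i hi
  refine ⟨hpos i hi, fun j hj => ?_⟩
  by_cases hjx : j ∈ f.fintsupport x
  · exact hlt i hi j hjx hj
  · have hj0 : f j y = 0 := by
      by_contra hne
      exact hjx (hsub ((f.mem_finsupport y).2 hne))
    exact hj0 ▸ hpos i hi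

theorem disjoint_wellsSet {S T : Finset ι} (hcard : S.card = T.card) (hne : S ≠ T) :
    Disjoint (f.wellsSet S) (f.wellsSet T) := by
  obtain ⟨i, hiS, hiT⟩ :=
    Finset.not_subset.1 fun h => hne (Finset.eq_of_subset_of_card_le h hcard.ge)
  obtain ⟨j, hjT, hjS⟩ :=
    Finset.not_subset.1 fun h => hne (Finset.eq_of_subset_of_card_le h hcard.le).symm
  exact Set.disjoint_left.2 fun x hxS hxT =>
    ((hxS i hiS).2 j hjS).asymm ((hxT j hjT).2 i hiT)

theorem mem_wellsSet_finsupport (x : X) : x ∈ f.wellsSet (f.finsupport x) := by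
  intro i hi
  have hpos : 0 < f i x := lt_of_le_of_ne (f.nonneg i x) ((f.mem_finsupport x).1 hi).symm
  refine ⟨hpos, fun j hj => ?_⟩
  rw [f.mem_finsupport, Function.mem_support, not_not] at hj
  exact hj ▸ hpos

theorem finsupport_nonempty {x : X} (hx : x ∈ s) : (f.finsupport x).Nonempty := by
  by_contra h
  have := f.sum_finsupport hx
  rw [Finset.not_nonempty_iff_eq_empty.1 h, Finset.sum_empty] at this
  exact zero_ne_one this

theorem exists_pairwiseDisjoint_refinement {N : ℕ} (hN : ∀ x ∈ s, (f.finsupport x).card ≤ N) :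
    ∃ 𝒲 : Fin N → Set (Set X), (∀ k, ∀ w ∈ 𝒲 k, IsOpen w ∧ ∃ i, w ⊆ Function.support (f i)) ∧
      (∀ k, (𝒲 k).PairwiseDisjoint id) ∧ s ⊆ ⋃ k, ⋃₀ 𝒲 k := by
  refine ⟨fun k => f.wellsSet '' {S | S.card = k + 1}, ?_, ?_, ?_⟩
  · rintro k _ ⟨S, hS : S.card = k + 1, rfl⟩
    obtain ⟨i, hi⟩ := Finset.card_pos.1 (show 0 < S.card by omega)
    exact ⟨f.isOpen_wellsSet S, i, f.wellsSet_subset_support hi⟩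
  · rintro k _ ⟨S, hS, rfl⟩ _ ⟨T, hT, rfl⟩ hne
    exact f.disjoint_wellsSet (hS.trans hT.symm) (ne_of_apply_ne _ hne)
  · intro x hx
    have hpos := (f.finsupport_nonempty hx).card_pos
    refine Set.mem_iUnion.2 ⟨⟨(f.finsupport x).card - 1, by grind [hN x hx]⟩, ?_⟩
    exact ⟨_, ⟨f.finsupport x, by grind, rfl⟩, f.mem_wellsSet_finsupport x⟩

end PartitionOfUnity

theorem HasCoveringDimLE.exists_pairwiseDisjoint_refinement {Y : Type*} [TopologicalSpace Y]
    [T2Space Y] [ParacompactSpace Y] {N : ℕ} (hN : HasCoveringDimLE Y N) (𝒰 : Set (Set Y))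
    (hopen : ∀ U ∈ 𝒰, IsOpen U) (hcover : ⋃₀ 𝒰 = univ) :
    ∃ 𝒲 : Fin N → Set (Set Y), (∀ k, ∀ w ∈ 𝒲 k, IsOpen w ∧ ∃ U ∈ 𝒰, w ⊆ U) ∧
      (∀ k, (𝒲 k).PairwiseDisjoint id) ∧ ⋃ k, ⋃₀ 𝒲 k = univ := by
  obtain ⟨𝒱, h𝒱open, h𝒱cover, h𝒱refines, h𝒱order⟩ := hN 𝒰 hopen hcover
  obtain ⟨f, hf⟩ := PartitionOfUnity.exists_isSubordinate isClosed_univ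
    (fun V : 𝒱 => (V : Set Y)) (fun V => h𝒱open V V.2) (by rw [← sUnion_eq_iUnion, h𝒱cover])
  have hsupport : ∀ V, Function.support (f V) ⊆ V := fun V => subset_tsupport _ |>.trans (hf V)
  have hcard : ∀ y ∈ univ, (f.finsupport y).card ≤ N := by
    intro y _
    have hsub : Subtype.val '' (f.finsupport y : Set 𝒱) ⊆ {V ∈ 𝒱 | y ∈ V} := by
      rintro _ ⟨V, hV, rfl⟩
      exact ⟨V.2, hsupport V ((f.mem_finsupport y).1 hV)⟩
    calc (f.finsupport y).card = (Subtype.val '' (f.finsupport y : Set 𝒱)).ncard := by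
          rw [Set.ncard_image_of_injective _ Subtype.val_injective, Set.ncard_coe_finset]
      _ ≤ {V ∈ 𝒱 | y ∈ V}.ncard := Set.ncard_le_ncard hsub (h𝒱order y).1
      _ ≤ N := (h𝒱order y).2
  obtain ⟨𝒲, h𝒲, h𝒲disj, h𝒲cover⟩ := f.exists_pairwiseDisjoint_refinement hcard
  refine ⟨𝒲, fun k w hw => ?_, h𝒲disj, univ_subset_iff.1 h𝒲cover⟩
  obtain ⟨hw, V, hwV⟩ := h𝒲 k w hw
  obtain ⟨U, hU, hVU⟩ := h𝒱refines V V.2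
  exact ⟨hw, U, hU, hwV.trans ((hsupport V).trans hVU)⟩

/-- Let `Y` be a Hausdorff paracompact space of finite covering dimension
and let `P` be a property of open subsets of `Y` that is inherited by open subsets, holds
near every point, and is preserved under unions of pairwise disjoint families.  Then `Y`
admits a finite open cover by sets satisfying `P`. -/
theorem finite_cover_of_local_property {Y : Type*} [TopologicalSpace Y]
    [T2Space Y] [ParacompactSpace Y]
    (hdim : ∃ N : ℕ, HasCoveringDimLE Y N)
    (P : Set Y → Prop)
    (hmono : ∀ U V : Set Y, IsOpen U → IsOpen V → U ⊆ V → P V → P U)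
    (hloc : ∀ y : Y, ∃ U : Set Y, IsOpen U ∧ y ∈ U ∧ P U)
    (hdisj : ∀ 𝒰 : Set (Set Y), (∀ U ∈ 𝒰, IsOpen U) → 𝒰.PairwiseDisjoint id →
      (∀ U ∈ 𝒰, P U) → P (⋃₀ 𝒰)) :
    ∃ 𝒱 : Finset (Set Y), (∀ V ∈ 𝒱, IsOpen V ∧ P V) ∧ ⋃₀ (𝒱 : Set (Set Y)) = univ := by
  classical
  obtain ⟨N, hN⟩ := hdim
  have hcover : ⋃₀ {U | IsOpen U ∧ P U} = univ := eq_univ_of_forall fun y =>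
    let ⟨U, hU, hyU, hPU⟩ := hloc y
    ⟨U, ⟨hU, hPU⟩, hyU⟩
  obtain ⟨𝒲, h𝒲, h𝒲disj, h𝒲cover⟩ :=
    hN.exists_pairwiseDisjoint_refinement _ (fun U hU => hU.1) hcover
  have h𝒲P : ∀ k, ∀ w ∈ 𝒲 k, IsOpen w ∧ P w := fun k w hw =>
    let ⟨hw, U, ⟨hU, hPU⟩, hwU⟩ := h𝒲 k w hw
    ⟨hw, hmono w U hw hU hwU hPU⟩
  refine ⟨Finset.univ.image fun k => ⋃₀ 𝒲 k, ?_, ?_⟩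
  · simp only [Finset.mem_image, Finset.mem_univ, true_and]
    rintro _ ⟨k, rfl⟩
    exact ⟨isOpen_sUnion fun w hw => (h𝒲P k w hw).1,
      hdisj _ (fun w hw => (h𝒲P k w hw).1) (h𝒲disj k) fun w hw => (h𝒲P k w hw).2⟩
  · simpa [sUnion_image] using h𝒲cover
end

section
/- Fix n ∈ ℕ and define F : ℝ × ℝⁿ → ℝ^{n+1} by F(t, s₁, …, sₙ) = ((n+1)t, (n+1)t·s₁, (n+1)t·s₁s₂, …, (n+1)t·s₁s₂⋯sₙ). Then F restricts to a bijection from the open box (0, 1/(n+1)) × (0,1)ⁿ onto the open time-ordered simplex {(x₁, …, x_{n+1}) ∈ ℝ^{n+1} : 1 > x₁ > x₂ > ⋯ > x_{n+1} > 0}; this restriction is C^∞ with C^∞ inverse, and the determinant of the Fréchet derivative of F is strictly positive at every point of (0, 1/(n+1)) × (0,1)ⁿ. -/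
open Set

/-- The map `F(t, s₁, …, sₙ) = ((n+1)t, (n+1)t·s₁, …, (n+1)t·s₁⋯sₙ)`, with the domain
`ℝ × ℝⁿ` encoded as `Fin (n+1) → ℝ` (coordinate `0` is `t`, coordinate `j.succ` is `sⱼ`). -/
noncomputable def frownieFirstPiece (n : ℕ) : (Fin (n + 1) → ℝ) → (Fin (n + 1) → ℝ) :=
  fun u i => (n + 1) * u 0 * ∏ j ∈ Finset.univ.filter (fun j : Fin n => (j : ℕ) < (i : ℕ)),
    u j.succ

/-- The open box `(0, 1/(n+1)) × (0,1)ⁿ`. -/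
def frownieBox (n : ℕ) : Set (Fin (n + 1) → ℝ) :=
  {u | u 0 ∈ Ioo (0 : ℝ) (1 / (n + 1)) ∧ ∀ j : Fin n, u j.succ ∈ Ioo (0 : ℝ) 1}

/-- The open time-ordered simplex `{1 > x₁ > x₂ > ⋯ > x_{n+1} > 0}`. -/
def openTimeOrderedSimplex (n : ℕ) : Set (Fin (n + 1) → ℝ) :=
  {x | StrictAnti x ∧ x 0 < 1 ∧ 0 < x (Fin.last n)}

namespace FrownieAux

/-- The index set `S n i = {j : Fin n | j < i}`. -/
def S (n : ℕ) (i : Fin (n + 1)) : Finset (Fin n) :=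
  Finset.univ.filter (fun j : Fin n => (j : ℕ) < (i : ℕ))

/-- The index set `T n i = {k : Fin (n+1) | k ≤ i}`. -/
def T (n : ℕ) (i : Fin (n + 1)) : Finset (Fin (n + 1)) :=
  Finset.univ.filter (fun k : Fin (n + 1) => (k : ℕ) ≤ (i : ℕ))

lemma S_zero (n : ℕ) : S n 0 = ∅ := by
  ext j; simp [S]

lemma S_succ {n : ℕ} (i : Fin n) :
    S n i.succ = insert i (S n i.castSucc) := by
  ext j
  simp [S, Nat.lt_succ_iff_lt_or_eq, Fin.val_eq_val, or_comm]
  exact le_iff_eq_or_lt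

lemma F_eq_S (n : ℕ) (u : Fin (n + 1) → ℝ) (i : Fin (n + 1)) :
    frownieFirstPiece n u i = (n + 1) * u 0 * ∏ j ∈ S n i, u j.succ := rfl

lemma F_zero (n : ℕ) (u : Fin (n + 1) → ℝ) :
    frownieFirstPiece n u 0 = (n + 1) * u 0 := by
  rw [F_eq_S, S_zero]; simp

lemma F_succ {n : ℕ} (u : Fin (n + 1) → ℝ) (i : Fin n) :
    frownieFirstPiece n u i.succ = u i.succ * frownieFirstPiece n u i.castSucc := by
  rw [F_eq_S, F_eq_S, S_succ, Finset.prod_insert (by simp [S])]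
  ring

lemma T_eq (n : ℕ) (i : Fin (n + 1)) :
    T n i = insert (0 : Fin (n + 1)) ((S n i).image Fin.succ) := by
  ext k
  induction k using Fin.cases with
  | zero => simp [T]
  | succ j =>
      simp only [T, S, Finset.mem_filter, Finset.mem_univ, true_and, Finset.mem_insert,
        Finset.mem_image, Fin.val_succ, Nat.succ_le_iff]
      constructor
      · intro h; exact Or.inr ⟨j, by simpa using h, rfl⟩
      · rintro (h | ⟨j', hj', hjj⟩)
        · exact absurd h (Fin.succ_ne_zero j)
        · cases Fin.succ_injective n hjj
          simpa using hj'

/-- The key rewriting of `F` as a single product. -/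
lemma F_eq_T (n : ℕ) (u : Fin (n + 1) → ℝ) (i : Fin (n + 1)) :
    frownieFirstPiece n u i = (n + 1) * ∏ k ∈ T n i, u k := by
  rw [F_eq_S, T_eq, Finset.prod_insert (by simp [Fin.succ_ne_zero]),
    Finset.prod_image (fun a _ b _ h => Fin.succ_injective n h)]
  ring

lemma box_pos {n : ℕ} {u : Fin (n + 1) → ℝ} (hu : u ∈ frownieBox n) (k : Fin (n + 1)) :
    0 < u k := by
  induction k using Fin.cases with
  | zero => exact hu.1.1
  | succ j => exact (hu.2 j).1

lemma F_pos {n : ℕ} {u : Fin (n + 1) → ℝ} (hu : u ∈ frownieBox n) (i : Fin (n + 1)) :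
    0 < frownieFirstPiece n u i := by
  rw [F_eq_T]
  have h1 : (0 : ℝ) < n + 1 := by positivity
  exact mul_pos h1 (Finset.prod_pos fun k _ => box_pos hu k)

lemma simplex_pos {n : ℕ} {x : Fin (n + 1) → ℝ} (hx : x ∈ openTimeOrderedSimplex n)
    (i : Fin (n + 1)) : 0 < x i :=
  lt_of_lt_of_le hx.2.2 (hx.1.antitone (Fin.le_last i))

lemma simplex_lt_one {n : ℕ} {x : Fin (n + 1) → ℝ} (hx : x ∈ openTimeOrderedSimplex n)
    (i : Fin (n + 1)) : x i < 1 :=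
  lt_of_le_of_lt (hx.1.antitone (Fin.zero_le i)) hx.2.1

/-- The inverse map. -/
noncomputable def G (n : ℕ) : (Fin (n + 1) → ℝ) → (Fin (n + 1) → ℝ) :=
  fun x i => Fin.cases (x 0 / (n + 1)) (fun j => x j.succ / x j.castSucc) i

lemma G_zero (n : ℕ) (x : Fin (n + 1) → ℝ) : G n x 0 = x 0 / (n + 1) := rfl

lemma G_succ {n : ℕ} (x : Fin (n + 1) → ℝ) (j : Fin n) :
    G n x j.succ = x j.succ / x j.castSucc := by
  simp [G]

/-- Telescoping product. -/
lemma tele {n : ℕ} {x : Fin (n + 1) → ℝ} (hx : ∀ k, x k ≠ 0) (i : Fin (n + 1)) :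
    ∏ j ∈ S n i, (x j.succ / x j.castSucc) = x i / x 0 := by
  induction i using Fin.induction with
  | zero => rw [S_zero]; simp [div_self (hx 0)]
  | succ i ih =>
      rw [S_succ, Finset.prod_insert (by simp [S]), ih, div_mul_div_comm,
        mul_comm (x i.succ) (x i.castSucc), mul_div_mul_left _ _ (hx i.castSucc)]

lemma contDiff_proj {m : ℕ} (k : Fin m) : ContDiff ℝ (⊤ : ℕ∞) (fun u : Fin m → ℝ => u k) :=
  (ContinuousLinearMap.proj k : (Fin m → ℝ) →L[ℝ] ℝ).contDiff

lemma contDiff_prod_proj {m : ℕ} (s : Finset (Fin m)) :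
    ContDiff ℝ (⊤ : ℕ∞) (fun u : Fin m → ℝ => ∏ k ∈ s, u k) := by
  classical
  induction s using Finset.induction with
  | empty => simpa using contDiff_const
  | insert _ _ ha ih =>
      simp only [Finset.prod_insert ha]
      exact (contDiff_proj _).mul ih

end FrownieAux

open FrownieAux in
/-- `F` restricts to a bijection from the open box
`(0, 1/(n+1)) × (0,1)ⁿ` onto the open time-ordered simplex; this restriction is `C^∞`
with `C^∞` inverse, and the determinant of the Fréchet derivative of `F` is strictly
positive at every point of the box. -/
theorem frownieFirstPiece_diffeo (n : ℕ) :
    Set.BijOn (frownieFirstPiece n) (frownieBox n) (openTimeOrderedSimplex n) ∧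
    ContDiffOn ℝ (⊤ : ℕ∞) (frownieFirstPiece n) (frownieBox n) ∧
    (∃ G : (Fin (n + 1) → ℝ) → (Fin (n + 1) → ℝ),
      ContDiffOn ℝ (⊤ : ℕ∞) G (openTimeOrderedSimplex n) ∧
      Set.InvOn G (frownieFirstPiece n) (frownieBox n) (openTimeOrderedSimplex n)) ∧
    ∀ u ∈ frownieBox n,
      0 < (fderiv ℝ (frownieFirstPiece n) u :
        (Fin (n + 1) → ℝ) →L[ℝ] (Fin (n + 1) → ℝ)).det := by
  classical
  have hn1 : (0 : ℝ) < n + 1 := by positivity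
  -- Maps box into simplex
  have hmapsF : Set.MapsTo (frownieFirstPiece n) (frownieBox n) (openTimeOrderedSimplex n) := by
    intro u hu
    refine ⟨Fin.strictAnti_iff_succ_lt.mpr fun i => ?_, ?_, F_pos hu _⟩
    · rw [F_succ]
      exact mul_lt_of_lt_one_left (F_pos hu i.castSucc) (hu.2 i).2
    · rw [F_zero]
      have h := hu.1.2
      calc (n + 1 : ℝ) * u 0 < (n + 1) * (1 / (n + 1)) :=
            mul_lt_mul_of_pos_left h hn1
        _ = 1 := by field_simp
  -- Maps simplex into box
  have hmapsG : Set.MapsTo (G n) (openTimeOrderedSimplex n) (frownieBox n) := by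
    intro x hx
    constructor
    · rw [G_zero]
      exact ⟨div_pos (simplex_pos hx 0) hn1,
        by exact div_lt_div_of_pos_right (simplex_lt_one hx 0) hn1⟩
    · intro j
      rw [G_succ]
      have h1 : 0 < x j.castSucc := simplex_pos hx _
      exact ⟨div_pos (simplex_pos hx _) h1,
        (div_lt_one h1).2 (hx.1 (Fin.castSucc_lt_succ : j.castSucc < j.succ))⟩
  -- Left inverse
  have hleft : Set.LeftInvOn (G n) (frownieFirstPiece n) (frownieBox n) := by
    intro u hu
    funext i
    induction i using Fin.cases with
    | zero =>
        rw [G_zero, F_zero, mul_div_cancel_left₀ _ (ne_of_gt hn1)]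
    | succ j =>
        rw [G_succ, F_succ, mul_div_assoc,
          div_self (ne_of_gt (F_pos hu j.castSucc)), mul_one]
  -- Right inverse
  have hright : Set.RightInvOn (G n) (frownieFirstPiece n) (openTimeOrderedSimplex n) := by
    intro x hx
    have hxne : ∀ k, x k ≠ 0 := fun k => ne_of_gt (simplex_pos hx k)
    funext i
    rw [F_eq_S]
    have hprod : ∏ j ∈ S n i, G n x j.succ = ∏ j ∈ S n i, (x j.succ / x j.castSucc) :=
      Finset.prod_congr rfl fun j _ => G_succ x j
    rw [hprod, tele hxne, G_zero]
    field_simp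
    rw [mul_comm (x 0) (x i)]
    exact mul_div_cancel_right₀ _ (hxne 0)
  have hinv : Set.InvOn (G n) (frownieFirstPiece n) (frownieBox n) (openTimeOrderedSimplex n) :=
    ⟨hleft, hright⟩
  refine ⟨hinv.bijOn hmapsF hmapsG, ?_, ⟨G n, ?_, hinv⟩, ?_⟩
  -- smoothness of F
  · apply ContDiff.contDiffOn
    apply contDiff_pi.mpr
    intro i
    have : (fun u => frownieFirstPiece n u i)
        = fun u : Fin (n + 1) → ℝ => (n + 1 : ℝ) * ∏ k ∈ T n i, u k := by
      funext u; exact F_eq_T n u i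
    rw [this]
    exact contDiff_const.mul (contDiff_prod_proj (T n i))
  -- smoothness of G
  · apply contDiffOn_pi.mpr
    intro i
    induction i using Fin.cases with
    | zero =>
        have : (fun x : Fin (n + 1) → ℝ => G n x 0)
            = fun x : Fin (n + 1) → ℝ => x 0 / (n + 1 : ℝ) := rfl
        rw [this]
        exact ((contDiff_proj 0).div_const _).contDiffOn
    | succ j =>
        have : (fun x : Fin (n + 1) → ℝ => G n x j.succ)
            = fun x : Fin (n + 1) → ℝ => x j.succ / x j.castSucc := by
          funext x; exact G_succ x j
        rw [this]
        exact ContDiffOn.div (contDiff_proj j.succ).contDiffOn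
          (contDiff_proj j.castSucc).contDiffOn
          (fun x hx => ne_of_gt (simplex_pos hx j.castSucc))
  -- determinant positivity
  · intro u hu
    set L : (Fin (n + 1) → ℝ) →L[ℝ] (Fin (n + 1) → ℝ) :=
      ContinuousLinearMap.pi (fun i => ((n : ℝ) + 1) •
        ∑ k ∈ T n i, (∏ l ∈ (T n i).erase k, u l) • ContinuousLinearMap.proj k) with hLdef
    have hderiv : HasFDerivAt (frownieFirstPiece n) L u := by
      have : frownieFirstPiece n
          = fun (v : Fin (n + 1) → ℝ) (i : Fin (n + 1)) =>
            (n + 1 : ℝ) * ∏ k ∈ T n i, v k := by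
        funext v i; exact F_eq_T n v i
      rw [this, hLdef]
      exact hasFDerivAt_pi.mpr fun i =>
        (hasFDerivAt_finset_prod).const_mul ((n : ℝ) + 1)
    rw [hderiv.fderiv]
    set A := LinearMap.toMatrix' (L : (Fin (n + 1) → ℝ) →ₗ[ℝ] (Fin (n + 1) → ℝ)) with hAdef
    have hdetA : (L : (Fin (n + 1) → ℝ) →L[ℝ] (Fin (n + 1) → ℝ)).det = A.det := by
      rw [hAdef, LinearMap.det_toMatrix']
    have hA : ∀ i k, A i k = if (k : ℕ) ≤ (i : ℕ)
        then ((n : ℝ) + 1) * ∏ l ∈ (T n i).erase k, u l else 0 := by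
      intro i k
      rw [hAdef, LinearMap.toMatrix'_apply]
      simp only [hLdef, ContinuousLinearMap.coe_coe, ContinuousLinearMap.pi_apply,
        ContinuousLinearMap.smul_apply, ContinuousLinearMap.coe_sum',
        Finset.sum_apply, ContinuousLinearMap.coe_smul', Pi.smul_apply,
        ContinuousLinearMap.proj_apply, smul_eq_mul]
      simp only [Pi.single_apply, mul_ite, mul_one, mul_zero, Finset.sum_ite_eq', T, Finset.mem_filter,
        Finset.mem_univ, true_and]
    have htri : A.det = ∏ i, A i i := by
      apply Matrix.det_of_lowerTriangular
      intro i j hij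
      have hij' : (i : ℕ) < (j : ℕ) := hij
      rw [hA]
      exact if_neg (by omega)
    rw [hdetA, htri]
    apply Finset.prod_pos
    intro i _
    rw [hA, if_pos (le_refl _)]
    exact mul_pos hn1 (Finset.prod_pos fun l _ => box_pos hu l)
end

section
/- Let p, q ∈ ℕ and set n = p + q. For a subset A ⊆ Fin n with exactly p elements, let ι_A : Fin p → Fin n and ι_{Aᶜ} : Fin q → Fin n denote the unique strictly increasing enumerations of A and of its complement. Then the map sending a pair (A, u) — where A ⊆ Fin n has p elements and u : Fin n → ℝ is strictly decreasing with all values in the open interval (0,1) — to the pair (u ∘ ι_A, u ∘ ι_{Aᶜ}) is a bijection onto the set of pairs (v, w) with v : Fin p → (0,1) strictly decreasing, w : Fin q → (0,1) strictly decreasing, and v(i) ≠ w(j) for all i, j. Moreover, the set of pairs (v, w) ∈ ℝᵖ × ℝᵠ such that v(i) = w(j) for some i, j has Lebesgue measure zero. -/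
/-!
A strictly decreasing tuple is determined by its range, so `shuffleSplit (A, u) = (v, w)` says
exactly that `range v = u '' A` and `range w = u '' Aᶜ`. The inverse therefore sends `(v, w)` to
the decreasing enumeration `u` of `range v ∪ range w` together with `A = u ⁻¹' range v`.
The coincidence set is the finite union of the proper hyperplanes `{v i = w j}`.
-/

open Set

/-- The shuffle map: a pair `(A, u)` of a `p`-element subset `A` of `Fin (p+q)` and a
tuple `u` is sent to `(u ∘ ι_A, u ∘ ι_{Aᶜ})`, where `ι_A` and `ι_{Aᶜ}` are the strictly
increasing enumerations of `A` and its complement (junk values if the cardinalities are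
wrong). -/
noncomputable def shuffleSplit (p q : ℕ)
    (Au : Finset (Fin (p + q)) × (Fin (p + q) → ℝ)) : (Fin p → ℝ) × (Fin q → ℝ) :=
  (if h : Au.1.card = p then fun i => Au.2 (Au.1.orderEmbOfFin h i) else 0,
   if h : Au.1ᶜ.card = q then fun j => Au.2 (Au.1ᶜ.orderEmbOfFin h j) else 0)

open MeasureTheory

section Enumeration

variable {α : Type*} [LinearOrder α]

lemma range_comp_orderEmbOfFin {β : Type*} (u : α → β) (A : Finset α) {k : ℕ}
    (h : A.card = k) : range (u ∘ A.orderEmbOfFin h) = u '' A := by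
  rw [range_comp, Finset.range_orderEmbOfFin]

lemma Finset.exists_strictAnti_range_eq (s : Finset α) {n : ℕ} (h : s.card = n) :
    ∃ u : Fin n → α, StrictAnti u ∧ Set.range u = s :=
  ⟨s.orderEmbOfFin h ∘ Fin.rev, (s.orderEmbOfFin h).strictMono.comp_strictAnti Fin.rev_strictAnti,
    by rw [range_comp, Fin.rev_surjective.range_eq, image_univ, Finset.range_orderEmbOfFin]⟩

lemma exists_strictAnti_range_eq_union {p q : ℕ} {v : Fin p → α} {w : Fin q → α}
    (hv : v.Injective) (hw : w.Injective) (hvw : Disjoint (range v) (range w)) :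
    ∃ u : Fin (p + q) → α, StrictAnti u ∧ range u = range v ∪ range w := by
  classical
  have hcard : (Finset.univ.image v ∪ Finset.univ.image w).card = p + q := by
    rw [Finset.card_union_of_disjoint (by simpa [← Finset.disjoint_coe] using hvw),
      Finset.card_image_of_injective _ hv, Finset.card_image_of_injective _ hw,
      Finset.card_univ, Finset.card_univ, Fintype.card_fin, Fintype.card_fin]
  simpa using Finset.exists_strictAnti_range_eq _ hcard

end Enumeration

lemma range_eq_image_union_image_compl {α β : Type*} [Fintype α] [DecidableEq α] (u : α → β)
    (A : Finset α) : range u = u '' A ∪ u '' ↑Aᶜ := by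
  rw [← image_union, Finset.coe_compl, union_compl_self, image_univ]

lemma card_compl_eq_of_card_eq {p q : ℕ} {A : Finset (Fin (p + q))} (hA : A.card = p) :
    Aᶜ.card = q := by
  rw [Finset.card_compl, hA, Fintype.card_fin]
  omega

lemma shuffleSplit_of_card_eq {p q : ℕ} {A : Finset (Fin (p + q))} (u : Fin (p + q) → ℝ)
    (hA : A.card = p) :
    shuffleSplit p q (A, u) =
      (u ∘ A.orderEmbOfFin hA, u ∘ Aᶜ.orderEmbOfFin (card_compl_eq_of_card_eq hA)) := by
  simp only [shuffleSplit, dif_pos hA, dif_pos (card_compl_eq_of_card_eq hA)]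
  rfl

lemma shuffleSplit_eq_iff {p q : ℕ} {A : Finset (Fin (p + q))} {u : Fin (p + q) → ℝ}
    {v : Fin p → ℝ} {w : Fin q → ℝ} (hA : A.card = p) (hu : StrictAnti u) (hv : StrictAnti v)
    (hw : StrictAnti w) :
    shuffleSplit p q (A, u) = (v, w) ↔ range v = u '' A ∧ range w = u '' ↑Aᶜ := by
  rw [shuffleSplit_of_card_eq u hA, Prod.mk.injEq,
    ← (hu.comp_strictMono (A.orderEmbOfFin _).strictMono).range_inj hv,
    ← (hu.comp_strictMono (Aᶜ.orderEmbOfFin _).strictMono).range_inj hw,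
    range_comp_orderEmbOfFin, range_comp_orderEmbOfFin, eq_comm, @eq_comm _ (range w)]

def shuffleDomain (p q : ℕ) (S : Set ℝ) : Set (Finset (Fin (p + q)) × (Fin (p + q) → ℝ)) :=
  {Au | Au.1.card = p ∧ StrictAnti Au.2 ∧ ∀ k, Au.2 k ∈ S}

def shuffleCodomain (p q : ℕ) (S : Set ℝ) : Set ((Fin p → ℝ) × (Fin q → ℝ)) :=
  {vw | StrictAnti vw.1 ∧ StrictAnti vw.2 ∧ (∀ i, vw.1 i ∈ S) ∧ (∀ j, vw.2 j ∈ S) ∧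
    ∀ i j, vw.1 i ≠ vw.2 j}

lemma shuffleSplit_mapsTo {p q : ℕ} (S : Set ℝ) :
    MapsTo (shuffleSplit p q) (shuffleDomain p q S) (shuffleCodomain p q S) := by
  rintro ⟨A, u⟩ ⟨hA, hu, huS⟩
  rw [shuffleSplit_of_card_eq u hA]
  exact ⟨hu.comp_strictMono (A.orderEmbOfFin hA).strictMono,
    hu.comp_strictMono (Aᶜ.orderEmbOfFin _).strictMono, fun i => huS _, fun j => huS _,
    fun i j h => Finset.mem_compl.1 (Aᶜ.orderEmbOfFin_mem _ j)
      (hu.injective h ▸ A.orderEmbOfFin_mem hA i)⟩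

lemma shuffleSplit_injOn {p q : ℕ} (S : Set ℝ) :
    InjOn (shuffleSplit p q) (shuffleDomain p q S) := by
  rintro ⟨A, u⟩ hAu ⟨B, u'⟩ ⟨hB, hu', -⟩ h
  obtain ⟨hv, hw, -⟩ := shuffleSplit_mapsTo S hAu
  obtain ⟨hA, hu, -⟩ := hAu
  obtain ⟨hvA, hwA⟩ := (shuffleSplit_eq_iff hA hu hv hw).1 rfl
  obtain ⟨hvB, hwB⟩ := (shuffleSplit_eq_iff hB hu' hv hw).1 h.symm
  have huu' : u = u' := (hu.range_inj hu').1 <| by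
    rw [range_eq_image_union_image_compl u A, range_eq_image_union_image_compl u' B, ← hvA, ← hwA,
      ← hvB, ← hwB]
  subst huu'
  exact congrArg (·, u) (Finset.coe_injective (hu.injective.image_injective (hvA.symm.trans hvB)))

lemma shuffleSplit_surjOn {p q : ℕ} (S : Set ℝ) :
    SurjOn (shuffleSplit p q) (shuffleDomain p q S) (shuffleCodomain p q S) := by
  classical
  rintro ⟨v, w⟩ ⟨hv, hw, hvS, hwS, hvw⟩
  have hdisj : Disjoint (range v) (range w) := disjoint_range_iff.2 hvw
  obtain ⟨u, hu, hrange⟩ := exists_strictAnti_range_eq_union hv.injective hw.injective hdisj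
  set A := (u ⁻¹' range v).toFinset
  have hvA : u '' A = range v := by
    rw [coe_toFinset, image_preimage_eq_of_subset (hrange ▸ subset_union_left)]
  have hwA : u '' ↑Aᶜ = range w := by
    rw [Finset.coe_compl, coe_toFinset, ← preimage_compl, image_preimage_eq_inter_range, hrange,
      inter_union_distrib_left, compl_inter_self, empty_union, inter_eq_right]
    exact hdisj.subset_compl_left
  have hA : A.card = p := by
    rw [← Set.ncard_coe_finset, ← ncard_image_of_injective _ hu.injective, hvA,
      ncard_range_of_injective hv.injective, Nat.card_eq_fintype_card, Fintype.card_fin]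
  refine ⟨(A, u), ⟨hA, hu, fun k => ?_⟩, (shuffleSplit_eq_iff hA hu hv hw).2 ⟨hvA.symm, hwA.symm⟩⟩
  rcases (hrange ▸ mem_range_self k : u k ∈ range v ∪ range w) with ⟨i, hi⟩ | ⟨j, hj⟩
  · simpa [← hi] using hvS i
  · simpa [← hj] using hwS j

lemma shuffleSplit_bijOn_shuffleDomain {p q : ℕ} (S : Set ℝ) :
    BijOn (shuffleSplit p q) (shuffleDomain p q S) (shuffleCodomain p q S) :=
  ⟨shuffleSplit_mapsTo S, shuffleSplit_injOn S, shuffleSplit_surjOn S⟩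

lemma addHaar_ker_eq_zero {E : Type*} [NormedAddCommGroup E] [NormedSpace ℝ E]
    [MeasurableSpace E] [BorelSpace E] [FiniteDimensional ℝ E] (μ : Measure E)
    [μ.IsAddHaarMeasure] {f : E →ₗ[ℝ] ℝ} (hf : f ≠ 0) : μ (LinearMap.ker f) = 0 :=
  Measure.addHaar_submodule μ _ (by rwa [Ne, LinearMap.ker_eq_top])

lemma volume_setOf_apply_eq_apply {p q : ℕ} (i : Fin p) (j : Fin q) :
    volume {vw : (Fin p → ℝ) × (Fin q → ℝ) | vw.1 i = vw.2 j} = 0 := by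
  -- not found by instance search through the defeq `volume = volume.prod volume`
  have : (volume : Measure ((Fin p → ℝ) × (Fin q → ℝ))).IsAddHaarMeasure :=
    Measure.prod.instIsAddHaarMeasure _ _
  let f := (LinearMap.proj i).comp (LinearMap.fst ℝ (Fin p → ℝ) (Fin q → ℝ)) -
    (LinearMap.proj j).comp (LinearMap.snd ℝ (Fin p → ℝ) (Fin q → ℝ))
  have hf : f ≠ 0 := fun h => by
    simpa [f] using LinearMap.congr_fun h (Pi.single i 1, 0)
  convert addHaar_ker_eq_zero volume hf using 2
  ext vw
  simp [f, sub_eq_zero]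

lemma volume_setOf_exists_apply_eq_apply {p q : ℕ} :
    volume {vw : (Fin p → ℝ) × (Fin q → ℝ) | ∃ i j, vw.1 i = vw.2 j} = 0 := by
  simp only [ofPred_exists, measure_iUnion_null_iff]
  exact volume_setOf_apply_eq_apply

/-- The shuffle map is a bijection from the set of pairs `(A, u)` — with
`A ⊆ Fin (p+q)` of cardinality `p` and `u` strictly decreasing with values in `(0,1)` —
onto the set of pairs `(v, w)` of strictly decreasing tuples with values in `(0,1)` having
no common value.  Moreover, the set of pairs `(v, w)` sharing some value has Lebesgue
measure zero. -/
theorem shuffleSplit_bijOn (p q : ℕ) :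
    Set.BijOn (shuffleSplit p q)
      {Au : Finset (Fin (p + q)) × (Fin (p + q) → ℝ) |
        Au.1.card = p ∧ StrictAnti Au.2 ∧ ∀ k, Au.2 k ∈ Ioo (0 : ℝ) 1}
      {vw : (Fin p → ℝ) × (Fin q → ℝ) |
        StrictAnti vw.1 ∧ StrictAnti vw.2 ∧ (∀ i, vw.1 i ∈ Ioo (0 : ℝ) 1) ∧
        (∀ j, vw.2 j ∈ Ioo (0 : ℝ) 1) ∧ ∀ i j, vw.1 i ≠ vw.2 j} ∧
    MeasureTheory.volume
      {vw : (Fin p → ℝ) × (Fin q → ℝ) | ∃ i j, vw.1 i = vw.2 j} = 0 := by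
  exact ⟨shuffleSplit_bijOn_shuffleDomain (Ioo 0 1), volume_setOf_exists_apply_eq_apply⟩
end

section
/- Let G = ℤ/2ℤ × ℤ and define c : G × G → ℂˣ by c((a,b),(a',b')) = (−1)^{a'·b}, which is well defined since (−1)^{a'·b} depends only on a' modulo 2. Then c is a 2-cocycle for the trivial action of G on ℂˣ, i.e. c(y,z)·c(x, y+z) = c(x+y, z)·c(x,y) for all x, y, z ∈ G, and c is not a 2-coboundary: there is no function λ : G → ℂˣ such that c(x,y) = λ(x)·λ(y)·λ(x+y)⁻¹ for all x, y ∈ G. -/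
/-!
Since `a' ↦ (−1)^{a'}` is a character of `ℤ/2`, the cochain `c(x, y) = ((−1)^{a'})^b` is
bimultiplicative, and every bimultiplicative cochain satisfies the cocycle identity. On an
abelian group a coboundary `λ(x)λ(y)λ(x+y)⁻¹` is symmetric in `x` and `y`,
whereas `c((1,0),(0,1)) = 1` and `c((0,1),(1,0)) = −1`.
-/

/-- The 2-cochain `c((a,b),(a',b')) = (−1)^{a'·b}` on `G = ℤ/2 × ℤ` with values in `ℂˣ`. -/
noncomputable def projCocycle : (ZMod 2 × ℤ) → (ZMod 2 × ℤ) → ℂˣ :=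
  fun x y => (-1 : ℂˣ) ^ (((y.1.val : ℤ)) * x.2)

theorem cocycle_identity_of_bimultiplicative {A M : Type*} [Add A] [CommMonoid M]
    {β : A → A → M} (add_left : ∀ x y z, β (x + y) z = β x z * β y z)
    (add_right : ∀ x y z, β x (y + z) = β x y * β x z) (x y z : A) :
    β y z * β x (y + z) = β (x + y) z * β x y := by
  rw [add_left, add_right]
  ac_rfl

theorem coboundary_symm {A M : Type*} [AddCommMagma A] [CommGroup M] {c : A → A → M}
    {lam : A → M} (hc : ∀ x y, c x y = lam x * lam y * (lam (x + y))⁻¹) (x y : A) :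
    c x y = c y x := by
  rw [hc, hc, add_comm, mul_comm (lam x)]

theorem ZMod.pow_val_add_of_pow_eq_one {M : Type*} [Monoid M] {n : ℕ} [NeZero n] {u : M}
    (hu : u ^ n = 1) (a b : ZMod n) : u ^ (a + b).val = u ^ a.val * u ^ b.val := by
  rw [ZMod.val_add, ← pow_eq_pow_mod _ hu, pow_add]

theorem projCocycle_add_left (x y z : ZMod 2 × ℤ) :
    projCocycle (x + y) z = projCocycle x z * projCocycle y z := by
  simp only [projCocycle, Prod.snd_add, mul_add, zpow_add]

theorem projCocycle_add_right (x y z : ZMod 2 × ℤ) :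
    projCocycle x (y + z) = projCocycle x y * projCocycle x z := by
  simp only [projCocycle, Prod.fst_add, zpow_mul, zpow_natCast,
    ZMod.pow_val_add_of_pow_eq_one (neg_one_sq (R := ℂˣ)), mul_zpow]

theorem projCocycle_ne_swap :
    projCocycle (1, 0) (0, 1) ≠ projCocycle (0, 1) (1, 0) := by
  simp only [projCocycle, ZMod.val_zero, ZMod.val_one]
  rw [Ne, Units.ext_iff]
  norm_num

/-- The function `c((a,b),(a',b')) = (−1)^{a'·b}` is a 2-cocycle on
`ℤ/2 × ℤ` (for the trivial action on `ℂˣ`), and it is not a 2-coboundary. -/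
theorem projCocycle_is_cocycle_not_coboundary :
    (∀ x y z : ZMod 2 × ℤ,
      projCocycle y z * projCocycle x (y + z) =
        projCocycle (x + y) z * projCocycle x y) ∧
    ¬ ∃ lam : ZMod 2 × ℤ → ℂˣ, ∀ x y : ZMod 2 × ℤ,
        projCocycle x y = lam x * lam y * (lam (x + y))⁻¹ :=
  ⟨cocycle_identity_of_bimultiplicative projCocycle_add_left projCocycle_add_right,
    fun ⟨_, hlam⟩ => projCocycle_ne_swap (coboundary_symm hlam _ _)⟩
end

section
/- Let G = ℤ/2ℤ × ℤ with trivial action on ℂˣ. Let Z²(G, ℂˣ) be the abelian group (under pointwise multiplication) of 2-cocycles, i.e. functions c : G × G → ℂˣ with c(y,z)·c(x, y+z) = c(x+y, z)·c(x,y) for all x, y, z ∈ G, and let B²(G, ℂˣ) be the subgroup of 2-coboundaries, i.e. those c of the form c(x,y) = λ(x)·λ(y)·λ(x+y)⁻¹ for some λ : G → ℂˣ. Then the quotient group Z²(G, ℂˣ)/B²(G, ℂˣ) is isomorphic to ℤ/2ℤ. -/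
/-- The group of `ℂˣ`-valued 2-cocycles on `G = ℤ/2 × ℤ` (trivial action), under
pointwise multiplication. -/
def twoCocycles : Subgroup ((ZMod 2 × ℤ) × (ZMod 2 × ℤ) → ℂˣ) where
  carrier := {c | ∀ x y z : ZMod 2 × ℤ,
    c (y, z) * c (x, y + z) = c (x + y, z) * c (x, y)}
  mul_mem' := by
    intro a b ha hb
    intro x y z
    show a (y, z) * b (y, z) * (a (x, y + z) * b (x, y + z)) = _
    rw [mul_mul_mul_comm, ha x y z, hb x y z, mul_mul_mul_comm]
    rfl
  one_mem' := by intro x y z; simp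
  inv_mem' := by
    intro a ha x y z
    show (a (y, z))⁻¹ * (a (x, y + z))⁻¹ = (a (x + y, z))⁻¹ * (a (x, y))⁻¹
    rw [← mul_inv, ha x y z, mul_inv]

/-- The group of `ℂˣ`-valued 2-coboundaries on `G = ℤ/2 × ℤ`. -/
def twoCoboundaries : Subgroup ((ZMod 2 × ℤ) × (ZMod 2 × ℤ) → ℂˣ) where
  carrier := {c | ∃ lam : ZMod 2 × ℤ → ℂˣ, ∀ x y : ZMod 2 × ℤ,
    c (x, y) = lam x * lam y * (lam (x + y))⁻¹}
  mul_mem' := by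
    rintro a b ⟨l, hl⟩ ⟨m, hm⟩
    refine ⟨fun x => l x * m x, fun x y => ?_⟩
    simp only [Pi.mul_apply, hl x y, hm x y, mul_inv]
    ac_rfl
  one_mem' := ⟨1, by simp⟩
  inv_mem' := by
    rintro a ⟨l, hl⟩
    refine ⟨fun x => (l x)⁻¹, fun x y => ?_⟩
    simp only [Pi.inv_apply, hl x y, mul_inv, inv_inv]

section Beta
abbrev GG := ZMod 2 × ℤ
variable (c : GG × GG → ℂˣ)
  (hc : ∀ x y z : GG, c (y, z) * c (x, y + z) = c (x + y, z) * c (x, y))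

noncomputable def beta (x y : GG) : ℂˣ := c (x, y) * (c (y, x))⁻¹

include hc

lemma c_zero_left (y : GG) : c (0, y) = c (0, 0) := by
  have h := hc 0 0 y
  simp only [zero_add] at h
  exact mul_left_cancel h

lemma c_zero_right (x : GG) : c (x, 0) = c (0, 0) := by
  have h := hc x 0 0
  simp only [add_zero, zero_add] at h
  exact mul_right_cancel h.symm

lemma beta_zero_left (y : GG) : beta c 0 y = 1 := by
  unfold beta
  rw [c_zero_left c hc y, c_zero_right c hc y, mul_inv_cancel]

lemma beta_add_left (x y z : GG) :
    beta c (x + y) z = beta c x z * beta c y z := by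
  have e1 : c (x + y, z) = c (y, z) * c (x, y + z) * (c (x, y))⁻¹ :=
    eq_mul_inv_iff_mul_eq.mpr (hc x y z).symm
  have e2 : c (z, x + y) = c (x + z, y) * c (z, x) * (c (x, y))⁻¹ := by
    have h := hc z x y
    rw [add_comm z x] at h
    rw [eq_mul_inv_iff_mul_eq, mul_comm]
    exact h
  have e3 : c (x + z, y) = c (z, y) * c (x, y + z) * (c (x, z))⁻¹ := by
    have h := hc x z y
    rw [add_comm z y] at h
    exact eq_mul_inv_iff_mul_eq.mpr h.symm
  unfold beta
  rw [e1, e2, e3]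
  rw [Units.ext_iff]
  simp only [Units.val_mul, Units.val_inv_eq_inv_val]
  field_simp
end Beta

section Beta2
variable (c : GG × GG → ℂˣ)
  (hc : ∀ x y z : GG, c (y, z) * c (x, y + z) = c (x + y, z) * c (x, y))

def Ga : GG := ((1 : ZMod 2), (0 : ℤ))
def Gb : GG := ((0 : ZMod 2), (1 : ℤ))

lemma beta_swap (x y : GG) : beta c y x = (beta c x y)⁻¹ := by
  simp [beta, mul_comm]

lemma beta_self (x : GG) : beta c x x = 1 := mul_inv_cancel _

include hc

lemma beta_zero_right (x : GG) : beta c x 0 = 1 := by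
  rw [beta_swap, beta_zero_left c hc, inv_one]

lemma beta_nsmul_left (x y : GG) : ∀ n : ℕ, beta c (n • x) y = beta c x y ^ n := by
  intro n
  induction n with
  | zero => simpa using beta_zero_left c hc y
  | succ n ih => rw [succ_nsmul, beta_add_left c hc, ih, pow_succ]

lemma beta_neg_left (x y : GG) : beta c (-x) y = (beta c x y)⁻¹ := by
  have h := beta_add_left c hc x (-x) y
  rw [add_neg_cancel, beta_zero_left c hc] at h
  exact (inv_eq_of_mul_eq_one_right h.symm).symm

lemma beta_zsmul_left (x y : GG) : ∀ n : ℤ, beta c (n • x) y = beta c x y ^ n := by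
  intro n
  cases n with
  | ofNat n => simpa using beta_nsmul_left c hc x y n
  | negSucc n =>
      rw [negSucc_zsmul, beta_neg_left c hc, beta_nsmul_left c hc, zpow_negSucc]

lemma beta_add_right (x y z : GG) :
    beta c x (y + z) = beta c x y * beta c x z := by
  rw [beta_swap c (y + z) x, beta_add_left c hc, mul_inv,
    beta_swap c x y, beta_swap c x z, inv_inv, inv_inv]

lemma beta_zsmul_right (x y : GG) (n : ℤ) : beta c x (n • y) = beta c x y ^ n := by
  rw [beta_swap c (n • y) x, beta_zsmul_left c hc, beta_swap c x y, inv_zpow, inv_inv]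

omit hc in
lemma decomp (x : GG) : x = (x.1, (0:ℤ)) + x.2 • Gb := by
  ext <;> simp [Gb]

omit hc in
lemma zmod2_cases (t : ZMod 2) : t = 0 ∨ t = 1 := by revert t; decide

lemma beta_gen (g : GG) (h0 : beta c g Ga = 1) (h1 : beta c g Gb = 1) (y : GG) :
    beta c g y = 1 := by
  rw [decomp y, beta_add_right c hc, beta_zsmul_right c hc, h1, one_zpow, mul_one]
  rcases zmod2_cases y.1 with h | h <;> rw [h]
  · exact beta_zero_right c hc g
  · exact h0

lemma beta_trivial (hab : beta c Ga Gb = 1) (x y : GG) : beta c x y = 1 := by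
  have hba : beta c Gb Ga = 1 := by rw [beta_swap, hab, inv_one]
  have ha : ∀ y, beta c Ga y = 1 := beta_gen c hc Ga (beta_self c Ga) hab
  have hb : ∀ y, beta c Gb y = 1 := beta_gen c hc Gb hba (beta_self c Gb)
  rw [decomp x, beta_add_left c hc, beta_zsmul_left c hc, hb, one_zpow, mul_one]
  rcases zmod2_cases x.1 with h | h <;> rw [h]
  · exact beta_zero_left c hc y
  · exact ha y

lemma symm_of_ab (hab : c (Ga, Gb) = c (Gb, Ga)) (x y : GG) : c (x, y) = c (y, x) := by
  have h : beta c Ga Gb = 1 := by rw [beta, hab, mul_inv_cancel]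
  have := beta_trivial c hc h x y
  rw [beta] at this
  exact mul_inv_eq_one.mp this

lemma beta_sq (y : GG) : beta c Ga y * beta c Ga y = 1 := by
  rw [← beta_add_left c hc, show Ga + Ga = (0 : GG) by decide, beta_zero_left c hc]
end Beta2

section Ext

@[ext]
structure EE where
  u : ℂˣ
  g : GG

variable (c : GG × GG → ℂˣ)
  (hc : ∀ x y z : GG, c (y, z) * c (x, y + z) = c (x + y, z) * c (x, y))
  (hs : ∀ x y : GG, c (x, y) = c (y, x))

def eCommGroup : CommGroup EE where
  mul p q := ⟨p.u * q.u * c (p.g, q.g), p.g + q.g⟩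
  one := ⟨(c (0, 0))⁻¹, 0⟩
  inv p := ⟨p.u⁻¹ * (c (0, 0))⁻¹ * (c (-p.g, p.g))⁻¹, -p.g⟩
  mul_assoc p q r := by
    refine EE.ext ?_ (add_assoc _ _ _)
    have h := congrArg Units.val (hc p.g q.g r.g)
    push_cast at h
    show p.u * q.u * c (p.g, q.g) * r.u * c (p.g + q.g, r.g)
      = p.u * (q.u * r.u * c (q.g, r.g)) * c (p.g, q.g + r.g)
    rw [Units.ext_iff]
    push_cast
    linear_combination (-(p.u * q.u * r.u : ℂ)) * h
  one_mul p := by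
    refine EE.ext ?_ (zero_add _)
    show ((c (0,0))⁻¹ : ℂˣ) * p.u * c (0, p.g) = p.u
    rw [c_zero_left c hc p.g, mul_comm ((c ((0:GG),(0:GG)))⁻¹) p.u, mul_assoc,
      inv_mul_cancel, mul_one]
  mul_one p := by
    refine EE.ext ?_ (add_zero _)
    show p.u * (c (0,0))⁻¹ * c (p.g, 0) = p.u
    rw [c_zero_right c hc p.g, mul_assoc, inv_mul_cancel, mul_one]
  inv_mul_cancel p := by
    refine EE.ext ?_ (neg_add_cancel _)
    show p.u⁻¹ * (c (0, 0))⁻¹ * (c (-p.g, p.g))⁻¹ * p.u * c (-p.g, p.g) = (c (0,0))⁻¹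
    rw [Units.ext_iff]
    simp only [Units.val_mul, Units.val_inv_eq_inv_val]
    field_simp
  mul_comm p q := by
    refine EE.ext ?_ (add_comm _ _)
    show p.u * q.u * c (p.g, q.g) = q.u * p.u * c (q.g, p.g)
    rw [hs p.g q.g, mul_comm p.u q.u]

end Ext

section Main
variable (c : GG × GG → ℂˣ)
  (hc : ∀ x y z : GG, c (y, z) * c (x, y + z) = c (x + y, z) * c (x, y))

include hc in
lemma cobound_of_symm (hs : ∀ x y : GG, c (x, y) = c (y, x)) :
    ∃ lam : GG → ℂˣ, ∀ x y : GG, c (x, y) = lam x * lam y * (lam (x + y))⁻¹ := by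
  letI : CommGroup EE := eCommGroup c hc hs
  obtain ⟨z, hz⟩ := IsAlgClosed.exists_pow_nat_eq
    ((((c (0,0))⁻¹ * (c (Ga,Ga))⁻¹ : ℂˣ) : ℂ)) (n := 2) (by norm_num)
  have hz0 : z ≠ 0 := by
    intro h
    apply Units.ne_zero ((c ((0:GG),(0:GG)))⁻¹ * (c (Ga,Ga))⁻¹)
    rw [← hz, h]
    ring
  set α : ℂˣ := Units.mk0 z hz0 with hα
  set A : EE := ⟨α, Ga⟩ with hAdef
  set B : EE := ⟨1, Gb⟩ with hBdef
  have hA2 : A * A = 1 := by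
    refine EE.ext ?_ (show Ga + Ga = (0 : GG) by decide)
    show α * α * c (Ga, Ga) = (c (0,0))⁻¹
    rw [Units.ext_iff]
    simp only [Units.val_mul, Units.val_inv_eq_inv_val, hα, Units.val_mk0]
    rw [← sq, hz]
    simp only [Units.val_mul, Units.val_inv_eq_inv_val]
    field_simp
  have mulg : ∀ p q : EE, (p * q).g = p.g + q.g := fun _ _ => rfl
  have invg : ∀ p : EE, (p⁻¹).g = -p.g := fun _ => rfl
  have powg : ∀ (p : EE) (n : ℕ), (p ^ n).g = n • p.g := by
    intro p n
    induction n with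
    | zero => rw [pow_zero, zero_smul]; rfl
    | succ n ih => rw [pow_succ, mulg, ih, succ_nsmul]
  have zpowg : ∀ (p : EE) (n : ℤ), (p ^ n).g = n • p.g := by
    intro p n
    cases n with
    | ofNat n => rw [Int.ofNat_eq_coe, zpow_natCast, powg]; simp
    | negSucc n => rw [zpow_negSucc, invg, powg, negSucc_zsmul]
  have hApow : ∀ n : ℕ, A ^ n = A ^ (n % 2) := by
    intro n
    conv_lhs => rw [← Nat.div_add_mod n 2]
    rw [pow_add, pow_mul, show A ^ 2 = 1 by rw [sq]; exact hA2, one_pow, one_mul]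
  set s : GG → EE := fun x => A ^ (x.1.val) * B ^ (x.2) with hsdef
  have sg : ∀ x : GG, (s x).g = x := by
    intro x
    show (A ^ x.1.val * B ^ x.2).g = x
    rw [mulg, powg, zpowg]
    ext
    · show x.1.val • (Ga.1) + x.2 • (Gb.1) = x.1
      simp [Ga, Gb, ZMod.natCast_val, ZMod.cast_id]
    · show x.1.val • (Ga.2) + x.2 • (Gb.2) = x.2
      simp [Ga, Gb]
  have shom : ∀ x y : GG, s (x + y) = s x * s y := by
    intro x y
    show A ^ ((x.1 + y.1).val) * B ^ (x.2 + y.2)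
      = (A ^ x.1.val * B ^ x.2) * (A ^ y.1.val * B ^ y.2)
    rw [mul_mul_mul_comm, ← pow_add, ← zpow_add]
    congr 1
    rw [ZMod.val_add, ← hApow]
  refine ⟨fun x => ((s x).u)⁻¹, fun x y => ?_⟩
  have h := congrArg EE.u (shom x y)
  rw [show (s x * s y).u = (s x).u * (s y).u * c ((s x).g, (s y).g) from rfl, sg, sg] at h
  rw [inv_inv, h, Units.ext_iff]
  simp only [Units.val_mul, Units.val_inv_eq_inv_val]
  field_simp
end Main

section Assemble

lemma mem_twoCoboundaries_iff (c : GG × GG → ℂˣ) (hc : c ∈ twoCocycles) :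
    c ∈ twoCoboundaries ↔ c (Ga, Gb) = c (Gb, Ga) := by
  constructor
  · rintro ⟨l, hl⟩
    rw [hl Ga Gb, hl Gb Ga, add_comm Gb Ga, mul_comm (l Ga) (l Gb)]
  · intro hab
    exact cobound_of_symm c hc (symm_of_ab c hc hab)

lemma val_beta (c : GG × GG → ℂˣ) (x y : GG) :
    (beta c x y : ℂ) = (c (x, y) : ℂ) * ((c (y, x) : ℂ))⁻¹ := by
  simp [beta, Units.val_mul, Units.val_inv_eq_inv_val]

lemma neg_of_ne (c : GG × GG → ℂˣ) (hc : c ∈ twoCocycles)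
    (hne : c (Ga, Gb) ≠ c (Gb, Ga)) : c (Ga, Gb) = - c (Gb, Ga) := by
  have h := beta_sq c hc Gb
  have h' : (beta c Ga Gb : ℂ) * (beta c Ga Gb : ℂ) = 1 := by
    rw [← Units.val_mul, h, Units.val_one]
  rcases mul_self_eq_one_iff.mp h' with h1 | h1
  · exfalso
    apply hne
    have hb1 : beta c Ga Gb = 1 := Units.ext (by rw [h1, Units.val_one])
    rw [beta] at hb1
    exact mul_inv_eq_one.mp hb1
  · apply Units.ext
    rw [Units.val_neg]
    rw [val_beta] at h1
    field_simp at h1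
    exact h1

end Assemble

section Final

open Classical in
noncomputable def chi : twoCocycles →* Multiplicative (ZMod 2) where
  toFun c := if (c : GG × GG → ℂˣ) (Ga, Gb) = (c : GG × GG → ℂˣ) (Gb, Ga) then 1
    else Multiplicative.ofAdd 1
  map_one' := by simp
  map_mul' c d := by
    have hcd : ((c * d : twoCocycles) : GG × GG → ℂˣ) = (c : GG × GG → ℂˣ) * d := rfl
    simp only [hcd, Pi.mul_apply]
    by_cases h1 : (c : GG × GG → ℂˣ) (Ga, Gb) = (c : GG × GG → ℂˣ) (Gb, Ga) <;>
      by_cases h2 : (d : GG × GG → ℂˣ) (Ga, Gb) = (d : GG × GG → ℂˣ) (Gb, Ga)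
    · rw [if_pos h1, if_pos h2, if_pos (by rw [h1, h2]), one_mul]
    · rw [if_pos h1, if_neg h2, if_neg (by
        intro h
        apply h2
        rw [h1] at h
        exact mul_left_cancel h), one_mul]
    · rw [if_neg h1, if_pos h2, if_neg (by
        intro h
        apply h1
        rw [h2] at h
        exact mul_right_cancel h), mul_one]
    · rw [if_neg h1, if_neg h2, if_pos (by
        rw [neg_of_ne _ c.2 h1, neg_of_ne _ d.2 h2, neg_mul_neg])]
      decide

lemma neg_one_zpow_congr {m n : ℤ} (h : m % 2 = n % 2) :
    ((-1 : ℂˣ)) ^ m = (-1 : ℂˣ) ^ n := by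
  obtain ⟨k, hk⟩ : ∃ k, m = n + 2 * k := ⟨(m - n) / 2, by omega⟩
  subst hk
  rw [zpow_add, zpow_mul]
  norm_num

noncomputable def c₀ : GG × GG → ℂˣ := fun p => (-1 : ℂˣ) ^ ((p.1.1.val : ℤ) * p.2.2)

lemma c₀_mem : c₀ ∈ twoCocycles := by
  intro x y z
  show (-1 : ℂˣ) ^ ((y.1.val : ℤ) * z.2) * (-1 : ℂˣ) ^ ((x.1.val : ℤ) * (y.2 + z.2))
    = (-1 : ℂˣ) ^ (((x.1 + y.1).val : ℤ) * z.2) * (-1 : ℂˣ) ^ ((x.1.val : ℤ) * y.2)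
  rw [← zpow_add, ← zpow_add]
  apply neg_one_zpow_congr
  have hv : (x.1 + y.1).val = (x.1.val + y.1.val) % 2 := ZMod.val_add x.1 y.1
  rw [hv]
  push_cast
  set m := (x.1.val : ℤ)
  set n := (y.1.val : ℤ)
  set k := ((m + n) / 2 : ℤ) with hkdef
  have h2 : (m + n) % 2 = m + n - 2 * k := by omega
  rw [h2]
  have h3 : (m + n - 2 * k) * z.2 + m * y.2
      = (n * z.2 + m * (y.2 + z.2)) + 2 * ((-k) * z.2) := by ring
  rw [h3, Int.add_mul_emod_self_left]

lemma c₀_ab : c₀ (Ga, Gb) = -1 := by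
  show (-1 : ℂˣ) ^ (((1 : ZMod 2).val : ℤ) * (1:ℤ)) = -1
  norm_num [ZMod.val_one]

lemma c₀_ba : c₀ (Gb, Ga) = 1 := by
  show (-1 : ℂˣ) ^ (((0 : ZMod 2).val : ℤ) * (0:ℤ)) = 1
  norm_num

lemma chi_surj : Function.Surjective chi := by
  intro g
  have : g = 1 ∨ g = Multiplicative.ofAdd 1 := by revert g; decide
  rcases this with rfl | rfl
  · exact ⟨1, map_one chi⟩
  · refine ⟨⟨c₀, c₀_mem⟩, ?_⟩
    show (if c₀ (Ga, Gb) = c₀ (Gb, Ga) then 1 else Multiplicative.ofAdd 1) = _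
    rw [if_neg]
    rw [c₀_ab, c₀_ba]
    intro h
    have := congrArg Units.val h
    rw [Units.val_neg, Units.val_one] at this
    norm_num at this

lemma chi_ker : chi.ker = twoCoboundaries.subgroupOf twoCocycles := by
  ext c
  constructor
  · intro h
    have h' : (if (c : GG × GG → ℂˣ) (Ga, Gb) = (c : GG × GG → ℂˣ) (Gb, Ga) then 1
        else Multiplicative.ofAdd (1 : ZMod 2)) = 1 := h
    by_cases hab : (c : GG × GG → ℂˣ) (Ga, Gb) = (c : GG × GG → ℂˣ) (Gb, Ga)
    · exact (mem_twoCoboundaries_iff _ c.2).mpr hab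
    · rw [if_neg hab] at h'
      exact absurd h' (by decide)
  · intro h
    have hab := (mem_twoCoboundaries_iff _ c.2).mp h
    show (if (c : GG × GG → ℂˣ) (Ga, Gb) = (c : GG × GG → ℂˣ) (Gb, Ga) then 1
      else Multiplicative.ofAdd (1 : ZMod 2)) = 1
    rw [if_pos hab]

end Final

/-- The second group cohomology `H²(ℤ/2 × ℤ; ℂˣ)` (with trivial action),
presented as 2-cocycles modulo 2-coboundaries, is isomorphic to `ℤ/2`. -/
theorem cocycles_mod_coboundaries_iso_zmod2 :
    Nonempty ((twoCocycles ⧸ twoCoboundaries.subgroupOf twoCocycles) ≃*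
      Multiplicative (ZMod 2)) := by
  exact ⟨(QuotientGroup.quotientMulEquivOfEq chi_ker.symm).trans
    (QuotientGroup.quotientKerEquivOfSurjective chi chi_surj)⟩
end

section
/- Let m ≥ 1, n ≥ 1, let U ⊆ ℝᵐ be open and connected, and let T : U → Mₙ(ℝ) be a C^∞ map such that T(x) is an invertible matrix for every x ∈ U. Suppose that for every x ∈ U there is a linear functional ω(x) : ℝᵐ → ℝ such that the Fréchet derivative of T satisfies (DT)(x)(v) = ω(x)(v) · T(x) for all v ∈ ℝᵐ. Then there exists a constant matrix C ∈ GLₙ(ℝ) with |det C| = 1 such that T(x) = |det T(x)|^{1/n} · C for all x ∈ U. -/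
open Set

/-- Let `U ⊆ ℝᵐ` be open and connected and let `T : U → Mₙ(ℝ)` be a
smooth map with invertible values such that the derivative of `T` in every direction is
a scalar multiple of `T` (the scalar given by a linear functional `ω(x)`).  Then
`T(x) = |det T(x)|^{1/n} · C` for a constant matrix `C` with `|det C| = 1`. -/
theorem scalar_derivative_transition_function
    (m n : ℕ) (hm : 1 ≤ m) (hn : 1 ≤ n)
    (U : Set (Fin m → ℝ)) (hU : IsOpen U) (hUconn : IsConnected U)
    (T : (Fin m → ℝ) → Matrix (Fin n) (Fin n) ℝ)
    (hsmooth : ∀ i j : Fin n, ContDiffOn ℝ (⊤ : ℕ∞) (fun x => T x i j) U)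
    (hinv : ∀ x ∈ U, IsUnit (T x))
    (hω : ∀ x ∈ U, ∃ ω : (Fin m → ℝ) →L[ℝ] ℝ,
      ∀ (v : Fin m → ℝ) (i j : Fin n),
        fderiv ℝ (fun y => T y i j) x v = ω v * T x i j) :
    ∃ C : Matrix (Fin n) (Fin n) ℝ, IsUnit C ∧ |C.det| = 1 ∧
      ∀ x ∈ U, T x = (|(T x).det| ^ ((n : ℝ)⁻¹)) • C := by
  classical
  haveI : NeZero n := ⟨by omega⟩
  -- basic facts
  have hdet : ∀ x ∈ U, (T x).det ≠ 0 := by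
    intro x hx
    exact (Matrix.isUnit_iff_isUnit_det _ |>.mp (hinv x hx)).ne_zero
  have hdiff : ∀ (i j : Fin n), ∀ x ∈ U, DifferentiableAt ℝ (fun y => T y i j) x := by
    intro i j x hx
    exact (((hsmooth i j).differentiableOn (by simp)) x hx).differentiableAt (hU.mem_nhds hx)
  have hentry : ∀ x ∈ U, ∃ i j : Fin n, T x i j ≠ 0 := by
    intro x hx
    by_contra h
    push_neg at h
    have hT0 : T x = 0 := by ext i j; exact h i j
    have : (T x).det ≠ 0 := hdet x hx
    rw [hT0] at this
    exact this ((by haveI : Nonempty (Fin n) := ⟨⟨0, by omega⟩⟩; exact Matrix.det_zero))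
  -- Local lemma: around each point, T y is a scalar multiple of T x.
  have hlocal : ∀ x ∈ U, ∃ ε > 0, Metric.ball x ε ⊆ U ∧
      ∀ y ∈ Metric.ball x ε, ∃ c : ℝ, T y = c • T x := by
    intro x hx
    obtain ⟨i0, j0, h0⟩ := hentry x hx
    have hco : ContinuousAt (fun y => T y i0 j0) x := (hdiff i0 j0 x hx).continuousAt
    have hev : ∀ᶠ y in nhds x, y ∈ U ∧ T y i0 j0 ≠ 0 :=
      (hU.eventually_mem hx).and (hco.eventually_ne h0)
    obtain ⟨ε, hε, hball⟩ := Metric.eventually_nhds_iff_ball.mp hev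
    refine ⟨ε, hε, fun y hy => (hball y hy).1, ?_⟩
    -- the ratio function is constant on the ball
    have key : ∀ i j : Fin n, ∀ y ∈ Metric.ball x ε,
        T y i j * (T y i0 j0)⁻¹ = T x i j * (T x i0 j0)⁻¹ := by
      intro i j y hy
      have hdiffB : DifferentiableOn ℝ (fun z => T z i j * (T z i0 j0)⁻¹) (Metric.ball x ε) := by
        intro z hz
        obtain ⟨hzU, hz0⟩ := hball z hz
        exact (((hdiff i j z hzU).mul ((hdiff i0 j0 z hzU).inv hz0))).differentiableWithinAt
      refine (convex_ball x ε).is_const_of_fderivWithin_eq_zero hdiffB ?_ hy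
        (Metric.mem_ball_self hε)
      intro z hz
      obtain ⟨hzU, hz0⟩ := hball z hz
      rw [fderivWithin_of_isOpen Metric.isOpen_ball hz]
      obtain ⟨ω, hωz⟩ := hω z hzU
      have hc : HasFDerivAt (fun y => T y i j) (T z i j • ω) z := by
        have h1 : fderiv ℝ (fun y => T y i j) z = T z i j • ω := by
          ext v
          simp only [ContinuousLinearMap.coe_smul', Pi.smul_apply, smul_eq_mul]
          rw [hωz v i j]; ring
        exact h1 ▸ (hdiff i j z hzU).hasFDerivAt
      have hd : HasFDerivAt (fun y => T y i0 j0) (T z i0 j0 • ω) z := by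
        have h1 : fderiv ℝ (fun y => T y i0 j0) z = T z i0 j0 • ω := by
          ext v
          simp only [ContinuousLinearMap.coe_smul', Pi.smul_apply, smul_eq_mul]
          rw [hωz v i0 j0]; ring
        exact h1 ▸ (hdiff i0 j0 z hzU).hasFDerivAt
      have hdinv : HasFDerivAt (fun y => (T y i0 j0)⁻¹)
          ((-ContinuousLinearMap.mulLeftRight ℝ ℝ (T z i0 j0)⁻¹ (T z i0 j0)⁻¹).comp
            (T z i0 j0 • ω)) z :=
        (hasFDerivAt_inv' hz0).comp z hd
      have hq := hc.mul hdinv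
      have : (T z i j • (((-ContinuousLinearMap.mulLeftRight ℝ ℝ (T z i0 j0)⁻¹
          (T z i0 j0)⁻¹).comp (T z i0 j0 • ω))) + (T z i0 j0)⁻¹ • (T z i j • ω))
          = (0 : (Fin m → ℝ) →L[ℝ] ℝ) := by
        ext v
        simp only [ContinuousLinearMap.add_apply, ContinuousLinearMap.coe_smul',
          Pi.smul_apply, ContinuousLinearMap.comp_apply, ContinuousLinearMap.neg_apply,
          ContinuousLinearMap.mulLeftRight_apply, ContinuousLinearMap.zero_apply,
          smul_eq_mul]
        field_simp
        ring
      rw [this] at hq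
      exact hq.fderiv
    intro y hy
    obtain ⟨hyU, hy0⟩ := hball y hy
    refine ⟨T y i0 j0 * (T x i0 j0)⁻¹, ?_⟩
    ext i j
    have hk := key i j y hy
    have hx0 : T x i0 j0 ≠ 0 := h0
    simp only [Matrix.smul_apply, smul_eq_mul]
    calc T y i j = (T y i j * (T y i0 j0)⁻¹) * T y i0 j0 := by field_simp
      _ = (T x i j * (T x i0 j0)⁻¹) * T y i0 j0 := by rw [hk]
      _ = T y i0 j0 * (T x i0 j0)⁻¹ * T x i j := by ring
  -- Global: T x is a multiple of T x₀ for all x ∈ U.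
  obtain ⟨x₀, hx₀⟩ := hUconn.nonempty
  set S : Set (Fin m → ℝ) := {x | x ∈ U ∧ ∃ c : ℝ, c ≠ 0 ∧ T x = c • T x₀} with hS
  have hTne0 : ∀ x ∈ U, T x ≠ 0 := by
    intro x hx h0
    exact hdet x hx (by rw [h0]; exact (by haveI : Nonempty (Fin n) := ⟨⟨0, by omega⟩⟩; exact Matrix.det_zero))
  have hSopen : IsOpen S := by
    rw [isOpen_iff_mem_nhds]
    rintro x ⟨hxU, c, hc0, hcT⟩
    obtain ⟨ε, hε, hsub, hloc⟩ := hlocal x hxU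
    rw [Metric.mem_nhds_iff]
    refine ⟨ε, hε, ?_⟩
    intro y hy
    obtain ⟨c', hc'⟩ := hloc y hy
    have hyU : y ∈ U := hsub hy
    have hc'0 : c' ≠ 0 := by
      intro h
      rw [h, zero_smul] at hc'
      exact hTne0 y hyU hc'
    exact ⟨hyU, c' * c, mul_ne_zero hc'0 hc0, by rw [hc', hcT, smul_smul]⟩
  have hSsub : U ⊆ S := by
    refine hUconn.isPreconnected.subset_of_closure_inter_subset hSopen
      ⟨x₀, hx₀, hx₀, 1, one_ne_zero, (one_smul _ _).symm⟩ ?_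
    rintro x ⟨hxcl, hxU⟩
    obtain ⟨ε, hε, hsub, hloc⟩ := hlocal x hxU
    obtain ⟨y, hyb, hyS⟩ := (_root_.mem_closure_iff.mp hxcl) (Metric.ball x ε)
      Metric.isOpen_ball (Metric.mem_ball_self hε)
    obtain ⟨c', hc'⟩ := hloc y hyb
    obtain ⟨hyU, c, hc0, hcT⟩ := hyS
    have hc'0 : c' ≠ 0 := by
      intro h
      rw [h, zero_smul] at hc'
      exact hTne0 y hyU hc'
    refine ⟨hxU, c'⁻¹ * c, mul_ne_zero (inv_ne_zero hc'0) hc0, ?_⟩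
    have : T x = c'⁻¹ • T y := by
      rw [hc', smul_smul, inv_mul_cancel₀ hc'0, one_smul]
    rw [this, hcT, smul_smul]
  -- the scalar function
  obtain ⟨i0, j0, h00⟩ := hentry x₀ hx₀
  set f : (Fin m → ℝ) → ℝ := fun x => T x i0 j0 / T x₀ i0 j0 with hf
  have hfx : ∀ x ∈ U, T x = f x • T x₀ ∧ f x ≠ 0 := by
    intro x hx
    obtain ⟨-, c, hc0, hcT⟩ := hSsub hx
    have hfc : f x = c := by
      have : T x i0 j0 = c * T x₀ i0 j0 := by rw [hcT]; simp [Matrix.smul_apply]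
      rw [hf]; simp only []; rw [this]; field_simp
    rw [hfc]
    exact ⟨hcT, hc0⟩
  have hfcont : ContinuousOn f U := by
    apply ContinuousOn.div ((hsmooth i0 j0).continuousOn) continuousOn_const
    intro x _; exact h00
  have hfx₀ : f x₀ = 1 := by rw [hf]; field_simp
  have hfpos : ∀ x ∈ U, 0 < f x := by
    intro x hx
    rcases lt_or_ge 0 (f x) with h | h
    · exact h
    · exfalso
      have h0mem : (0 : ℝ) ∈ Icc (f x) (f x₀) := ⟨h, by rw [hfx₀]; norm_num⟩
      obtain ⟨z, hzU, hz⟩ := hUconn.isPreconnected.intermediate_value hx hx₀ hfcont h0mem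
      exact (hfx z hzU).2 hz
  -- the constant matrix
  have hd0 : (0:ℝ) < |(T x₀).det| := abs_pos.mpr (hdet x₀ hx₀)
  set g₀ : ℝ := |(T x₀).det| ^ ((n : ℝ)⁻¹) with hg₀
  have hg₀pos : 0 < g₀ := Real.rpow_pos_of_pos hd0 _
  have hg₀n : g₀ ^ n = |(T x₀).det| := by
    rw [hg₀, ← Real.rpow_natCast (|(T x₀).det| ^ ((n : ℝ)⁻¹)) n, ← Real.rpow_mul hd0.le]
    rw [inv_mul_cancel₀ (Nat.cast_ne_zero.mpr (by omega))]
    exact Real.rpow_one _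
  refine ⟨g₀⁻¹ • T x₀, ?_, ?_, ?_⟩
  · rw [Matrix.isUnit_iff_isUnit_det, Matrix.det_smul, isUnit_iff_ne_zero]
    exact mul_ne_zero (pow_ne_zero _ (inv_ne_zero hg₀pos.ne')) (hdet x₀ hx₀)
  · rw [Matrix.det_smul, abs_mul, abs_pow, abs_inv, abs_of_pos hg₀pos,
      Fintype.card_fin, inv_pow, hg₀n]
    field_simp
  · intro x hx
    obtain ⟨hTx, hfne⟩ := hfx x hx
    have hfposx := hfpos x hx
    have hdetx : |(T x).det| = (f x) ^ n * |(T x₀).det| := by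
      rw [hTx, Matrix.det_smul, Fintype.card_fin, abs_mul, abs_pow, abs_of_pos hfposx]
    have h1 : ((f x) ^ n : ℝ) ^ ((n : ℝ)⁻¹) = f x := by
      rw [← Real.rpow_natCast (f x) n, ← Real.rpow_mul hfposx.le,
        mul_inv_cancel₀ (Nat.cast_ne_zero.mpr (by omega)),
        Real.rpow_one]
    have hgx : |(T x).det| ^ ((n : ℝ)⁻¹) = f x * g₀ := by
      rw [hdetx, Real.mul_rpow (pow_nonneg hfposx.le _) hd0.le, h1]
    rw [hgx, hTx, smul_smul, mul_assoc, mul_inv_cancel₀ hg₀pos.ne', mul_one]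
end
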